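/- arXiv:1109.0227 — 4 statements merged into one kernel-verified Lean document; each statement's English description precedes it below -/
import Mathlib

section
/- For any nonnegative integer p, ∑_{x=0}^{p+1} (p-2x+1)^2 / (x!·(x+2)!·(p-x+3)!·(p-x+1)!) = 2·C(2p+4, p) / ((p+2)!·(p+3)!). -/
/-!
Multiplying by `((p + 3)!)²` turns the summand into `(p + 1 - 2x)² C(p+3, x) C(p+3, x+2)`.
Write `p + 1 - 2x = a - b` with `a = p + 3 - x`, `b = x + 2`, so that `(a - b)² = (a + b)² - 4ab`
with `a + b = p + 5` constant; absorption turns `a C(p+3, x)` and `b C(p+3, x+2)` into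
`(p + 3) C(p+2, x)` and `(p + 3) C(p+2, x+1)`. Both resulting sums are Vandermonde convolutions,
and what remains is factorial arithmetic.
-/

open Finset Nat

namespace Nat

theorem sum_range_choose_mul_choose_add (m N d : ℕ) :
    ∑ x ∈ range (N + 1), m.choose x * (N + d).choose (x + d) = (m + N + d).choose N := by
  calc ∑ x ∈ range (N + 1), m.choose x * (N + d).choose (x + d)
      = ∑ x ∈ range (N + 1), m.choose x * (N + d).choose (N - x) := by
        refine sum_congr rfl fun x hx => ?_
        rw [choose_symm_of_eq_add (a := x + d) (b := N - x) (by grind)]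
    _ = (m + N + d).choose N := by
        rw [add_assoc, add_choose_eq, Finset.Nat.sum_antidiagonal_eq_sum_range_succ_mk]

theorem cast_sub_two_mul_sq_mul_choose_mul_choose (N x : ℕ) (hx : x ≤ N + 2) :
    ((N : ℚ) - 2 * x) ^ 2 * (N + 2).choose x * (N + 2).choose (x + 2) =
      ((N : ℚ) + 4) ^ 2 * (N + 2).choose x * (N + 2).choose (x + 2) -
        4 * ((N : ℚ) + 2) ^ 2 * (N + 1).choose x * (N + 1).choose (x + 1) := by
  have h₁ : ((N + 1).choose x : ℚ) * (N + 2) = (N + 2).choose x * ((N : ℚ) + 2 - x) := by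
    exact_mod_cast choose_mul_succ_eq (N + 1) x
  have h₂ :
      ((N : ℚ) + 2) * (N + 1).choose (x + 1) = (N + 2).choose (x + 2) * ((x : ℚ) + 2) := by
    exact_mod_cast add_one_mul_choose_eq (N + 1) (x + 1)
  linear_combination
    4 * ((N : ℚ) + 2) * (N + 1).choose (x + 1) * h₁ +
      4 * ((N : ℚ) + 2 - x) * (N + 2).choose x * h₂

theorem sum_range_sub_two_mul_sq_mul_choose_mul_choose (N : ℕ) :
    ∑ x ∈ range (N + 1), ((N : ℚ) - 2 * x) ^ 2 * (N + 2).choose x * (N + 2).choose (x + 2) =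
      ((N : ℚ) + 4) ^ 2 * (2 * N + 4).choose N -
        4 * ((N : ℚ) + 2) ^ 2 * (2 * N + 2).choose N := by
  have h₁ : ∑ x ∈ range (N + 1), ((N + 2).choose x * (N + 2).choose (x + 2) : ℚ) =
      (2 * N + 4).choose N := by
    rw [show 2 * N + 4 = N + 2 + N + 2 by ring]
    exact_mod_cast sum_range_choose_mul_choose_add (N + 2) N 2
  have h₂ : ∑ x ∈ range (N + 1), ((N + 1).choose x * (N + 1).choose (x + 1) : ℚ) =
      (2 * N + 2).choose N := by
    rw [show 2 * N + 2 = N + 1 + N + 1 by ring]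
    exact_mod_cast sum_range_choose_mul_choose_add (N + 1) N 1
  rw [sum_congr rfl fun x hx => cast_sub_two_mul_sq_mul_choose_mul_choose N x
    (by grind), sum_sub_distrib, ← h₁, ← h₂, mul_sum, mul_sum]
  simp only [mul_assoc]

theorem sum_range_add_one_sub_two_mul_sq_mul_choose_mul_choose (p : ℕ) :
    ∑ x ∈ range (p + 2),
        ((p : ℚ) + 1 - 2 * x) ^ 2 * (p + 3).choose x * (p + 3).choose (x + 2) =
      2 * ((p : ℚ) + 3) * (2 * p + 4).choose p := by
  have h := sum_range_sub_two_mul_sq_mul_choose_mul_choose (p + 1)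
  rw [show 2 * (p + 1) + 4 = 2 * p + 6 by ring, show 2 * (p + 1) + 2 = 2 * p + 4 by ring] at h
  push_cast at h
  rw [h, cast_choose ℚ (by omega : p + 1 ≤ 2 * p + 6),
    cast_choose ℚ (by omega : p + 1 ≤ 2 * p + 4), cast_choose ℚ (by omega : p ≤ 2 * p + 4),
    show 2 * p + 6 - (p + 1) = p + 5 by omega,
    show 2 * p + 4 - (p + 1) = p + 3 by omega, show 2 * p + 4 - p = p + 4 by omega]
  simp only [factorial_succ]
  push_cast
  field_simp
  ring

end Nat

theorem partition_sum_eval (p : ℕ) :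
    ∑ x ∈ Finset.range (p + 2),
        ((p : ℚ) - 2 * (x : ℚ) + 1) ^ 2 /
          ((Nat.factorial x : ℚ) * (Nat.factorial (x + 2)) *
            (Nat.factorial (p + 3 - x)) * (Nat.factorial (p + 1 - x))) =
      2 * (Nat.choose (2 * p + 4) p : ℚ) /
        ((Nat.factorial (p + 2) : ℚ) * (Nat.factorial (p + 3))) := by
  have term : ∀ x ∈ range (p + 2),
      ((p : ℚ) - 2 * x + 1) ^ 2 / ((x ! : ℚ) * (x + 2)! * (p + 3 - x)! * (p + 1 - x)!) =
        ((p : ℚ) + 1 - 2 * x) ^ 2 * (p + 3).choose x * (p + 3).choose (x + 2) /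
          ((p + 3)! : ℚ) ^ 2 := by
    intro x hx
    rw [Nat.cast_choose ℚ (by grind : x ≤ p + 3),
      Nat.cast_choose ℚ (by grind : x + 2 ≤ p + 3), show p + 3 - (x + 2) = p + 1 - x by omega]
    field_simp
    ring
  rw [sum_congr rfl term, ← sum_div, Nat.sum_range_add_one_sub_two_mul_sq_mul_choose_mul_choose,
    Nat.factorial_succ (p + 2)]
  push_cast
  field_simp
  ring
end

section
/- The value 1 - ∑_{p=2}^∞ 2^p·(p-2)!/(p!·(p+1)!) equals (e^2 - 5)/4. -/
/-!
With `p = n + 2`, the term is `2^(n+2) / ((n+1)(n+2)(n+3)!)`, and the partial fraction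
`2/((n+1)(n+2)) = 2/(n+1) - 2/(n+2)` splits it as `f n - f (n+1) - 2^(n+1)/(n+3)!` with
`f n = 2^(n+1) / ((n+1)(n+2)!)`. The differences telescope to `f 0 = 1`, and the last part is a
quarter of the tail `∑_{k ≥ 3} 2^k/k! = e² - 5` of the exponential series.
-/

open Filter Topology Finset Nat

theorem tendsto_sum_range_sub_succ {G : Type*} [AddCommGroup G] [TopologicalSpace G]
    [IsTopologicalAddGroup G] {f : ℕ → G} (hf : Tendsto f atTop (𝓝 0)) :
    Tendsto (fun N ↦ ∑ i ∈ range N, (f i - f (i + 1))) atTop (𝓝 (f 0)) := by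
  simp_rw [sum_range_sub']
  simpa using tendsto_const_nhds.sub hf

theorem Real.hasSum_pow_div_factorial_add (x : ℝ) (k : ℕ) :
    HasSum (fun n ↦ x ^ (n + k) / (n + k)!) (Real.exp x - ∑ i ∈ range k, x ^ i / i !) := by
  rw [Real.exp_eq_exp_ℝ]
  exact (hasSum_nat_add_iff' k).mpr (NormedSpace.expSeries_div_hasSum_exp x)

theorem hasSum_two_pow_succ_div_factorial_add_three :
    HasSum (fun n : ℕ ↦ (2 : ℝ) ^ (n + 1) / (n + 3)!) ((Real.exp 2 - 5) / 4) := by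
  have h := (Real.hasSum_pow_div_factorial_add 2 3).div_const 4
  rw [show ∑ i ∈ range 3, (2 : ℝ) ^ i / i ! = 5 by norm_num [sum_range_succ]] at h
  refine h.congr_fun fun n ↦ ?_
  rw [pow_add]
  ring

theorem tendsto_two_pow_succ_div_succ_mul_factorial :
    Tendsto (fun n : ℕ ↦ (2 : ℝ) ^ (n + 1) / ((n + 1) * (n + 2)!)) atTop (𝓝 0) := by
  have hlim : Tendsto (fun n : ℕ ↦ (2 : ℝ) ^ (n + 2) / (n + 2)!) atTop (𝓝 0) :=
    (FloorSemiring.tendsto_pow_div_factorial_atTop (2 : ℝ)).comp (tendsto_add_atTop_nat 2)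
  refine squeeze_zero (fun n ↦ by positivity) (fun n ↦ ?_) hlim
  have hfac : (0 : ℝ) < (n + 2)! := by positivity
  calc (2 : ℝ) ^ (n + 1) / ((n + 1) * (n + 2)!) ≤ 2 ^ (n + 1) / (n + 2)! := by
        gcongr
        exact le_mul_of_one_le_left hfac.le (by linarith [n.cast_nonneg (α := ℝ)])
    _ ≤ 2 ^ (n + 2) / (n + 2)! := by gcongr <;> norm_num

theorem two_pow_mul_factorial_div_eq (n : ℕ) :
    (2 : ℝ) ^ (n + 2) * n ! / ((n + 2)! * (n + 3)!) =
      2 ^ (n + 1) / ((n + 1) * (n + 2)!) - 2 ^ (n + 2) / ((n + 2) * (n + 3)!)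
        - 2 ^ (n + 1) / (n + 3)! := by
  push_cast [Nat.factorial_succ]
  field_simp
  ring

theorem one_sub_series_eval :
    1 - ∑' n : ℕ, (2 : ℝ) ^ (n + 2) * (Nat.factorial n) /
        ((Nat.factorial (n + 2)) * (Nat.factorial (n + 3))) =
      (Real.exp 1 ^ 2 - 5) / 4 := by
  set f : ℕ → ℝ := fun n ↦ 2 ^ (n + 1) / ((n + 1) * (n + 2)!)
  have hterm : ∀ n : ℕ, (2 : ℝ) ^ (n + 2) * n ! / ((n + 2)! * (n + 3)!) =
      f n - f (n + 1) - 2 ^ (n + 1) / (n + 3)! := fun n ↦ by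
    simp only [f]
    rw [two_pow_mul_factorial_div_eq]
    push_cast
    ring_nf
  have hsum : HasSum (fun n : ℕ ↦ (2 : ℝ) ^ (n + 2) * n ! / ((n + 2)! * (n + 3)!))
      (f 0 - (Real.exp 2 - 5) / 4) := by
    rw [hasSum_iff_tendsto_nat_of_nonneg (fun n ↦ by positivity)]
    simp_rw [hterm, sum_sub_distrib (f := fun i ↦ f i - f (i + 1))]
    exact (tendsto_sum_range_sub_succ (f := f) tendsto_two_pow_succ_div_succ_mul_factorial).sub
      hasSum_two_pow_succ_div_factorial_add_three.tendsto_sum_nat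
  rw [hsum.tsum_eq, ← Real.exp_nat_mul]
  norm_num [f]
end

section
/- For real p > 0 and real s > 1, the integral (1/2π)∫_{-∞}^{∞} e^{ipx}/(1+ix)^s dx equals p^{s-1} e^{-p}/Γ(s), where (1+ix)^s is defined using the principal branch of the logarithm. -/
/-!
The function `t ↦ 1_{t > 0} t^(s-1) e^(-t) / Γ(s)` is the density of the Gamma(s, 1) distribution.
Its complex moment generating function is `z ↦ (1 - z)^(-s)` on the half-plane `re z < 1`: on the
real axis this is Euler's Gamma integral, and both sides are holomorphic there. On the imaginary
axis this says that the Fourier transform of the density is `ξ ↦ (1 + 2πiξ)^(-s)`, which is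
integrable since `s > 1`. Fourier inversion at the continuity point `p`, after the substitution
`x = 2πξ`, is Laplace's formula.
-/

open MeasureTheory Set Filter Topology Real Complex FourierTransform

namespace ProbabilityTheory

variable {a r : ℝ}

lemma integral_gammaMeasure_eq_integral_smul {E : Type*} [NormedAddCommGroup E] [NormedSpace ℝ E]
    (ha : 0 < a) (hr : 0 < r) (f : ℝ → E) :
    ∫ x, f x ∂gammaMeasure a r = ∫ x, gammaPDFReal a r x • f x := by
  rw [gammaMeasure, integral_withDensity_eq_integral_toReal_smul
    (show Measurable (gammaPDF a r) from (measurable_gammaPDFReal a r).ennreal_ofReal)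
    (ae_of_all _ fun _ ↦ ENNReal.ofReal_lt_top)]
  simp_rw [gammaPDF, ENNReal.toReal_ofReal (gammaPDFReal_nonneg ha hr _)]

lemma integral_gammaPDFReal_smul {E : Type*} [NormedAddCommGroup E] [NormedSpace ℝ E]
    (f : ℝ → E) :
    ∫ x, gammaPDFReal a r x • f x =
      ∫ x in Ioi 0, (r ^ a / Real.Gamma a * x ^ (a - 1) * Real.exp (-(r * x))) • f x := by
  rw [← integral_Ici_eq_integral_Ioi, ← integral_indicator measurableSet_Ici]
  congr with x
  by_cases hx : 0 ≤ x <;> simp [gammaPDFReal, hx]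

lemma integrable_gammaPDFReal (ha : 0 < a) (hr : 0 < r) : Integrable (gammaPDFReal a r) := by
  have : IsProbabilityMeasure (gammaMeasure a r) := isProbabilityMeasure_gammaMeasure ha hr
  have h : ∫ x, gammaPDFReal a r x = 1 := by
    simpa using (integral_gammaMeasure_eq_integral_smul ha hr fun _ ↦ (1 : ℝ)).symm
  exact .of_integral_ne_zero (h ▸ one_ne_zero)

lemma continuousAt_gammaPDFReal {x : ℝ} (hx : 0 < x) : ContinuousAt (gammaPDFReal a r) x := by
  refine ContinuousAt.congr ?_ ((eventually_ge_nhds hx).mono fun y hy ↦ (if_pos hy).symm)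
  exact (continuousAt_const.mul (continuousAt_id.rpow_const (Or.inl hx.ne'))).mul
    (by fun_prop)

lemma mgf_id_gammaMeasure (ha : 0 < a) (hr : 0 < r) {t : ℝ} (ht : t < r) :
    mgf id (gammaMeasure a r) t = (1 - t / r) ^ (-a) := by
  have hrt : 0 < r - t := sub_pos.2 ht
  calc mgf id (gammaMeasure a r) t
      = r ^ a / Real.Gamma a * ∫ x in Ioi 0, x ^ (a - 1) * Real.exp (-((r - t) * x)) := by
        rw [mgf, integral_gammaMeasure_eq_integral_smul ha hr, integral_gammaPDFReal_smul,
          ← integral_const_mul]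
        refine setIntegral_congr_fun measurableSet_Ioi fun x _ ↦ ?_
        simp only [id, smul_eq_mul, mul_assoc, ← Real.exp_add]
        ring_nf
    _ = (1 - t / r) ^ (-a) := by
        have hpos : 0 < 1 - t / r := by rwa [sub_pos, div_lt_one hr]
        have h : (1 - t / r)⁻¹ = r * (r - t)⁻¹ := by field_simp
        rw [integral_rpow_mul_exp_neg_mul_Ioi ha hrt, Real.rpow_neg hpos.le, one_div,
          ← Real.inv_rpow hpos.le, h, Real.mul_rpow hr.le (inv_nonneg.2 hrt.le)]
        field_simp [(Real.Gamma_pos_of_pos ha).ne']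

lemma Iio_subset_integrableExpSet_id_gammaMeasure (ha : 0 < a) (hr : 0 < r) :
    Iio r ⊆ integrableExpSet id (gammaMeasure a r) := fun t ht ↦ by
  refine .of_integral_ne_zero ?_
  rw [← mgf, mgf_id_gammaMeasure ha hr ht]
  exact (Real.rpow_pos_of_pos (by rwa [sub_pos, div_lt_one hr]) _).ne'

lemma complexMGF_id_gammaMeasure (ha : 0 < a) (hr : 0 < r) {z : ℂ} (hz : z.re < r) :
    complexMGF id (gammaMeasure a r) z = (1 - z / r) ^ (-a : ℂ) := by
  have hU : IsPreconnected {z : ℂ | z.re < r} := (convex_halfSpace_re_lt r).isPreconnected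
  have hmgf : AnalyticOnNhd ℂ (complexMGF id (gammaMeasure a r)) {z : ℂ | z.re < r} :=
    analyticOnNhd_complexMGF.mono fun z (hz : z.re < r) ↦
      interior_maximal (Iio_subset_integrableExpSet_id_gammaMeasure ha hr) isOpen_Iio hz
  have hpow : AnalyticOnNhd ℂ (fun z : ℂ ↦ (1 - z / r) ^ (-a : ℂ)) {z : ℂ | z.re < r} :=
    fun z (hz : z.re < r) ↦ (analyticAt_const.sub analyticAt_id.div_const).cpow
      analyticAt_const (Or.inl (by simpa [sub_pos, div_lt_one hr] using hz))
  have hreal : ∀ᶠ t : ℝ in 𝓝[≠] 0,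
      complexMGF id (gammaMeasure a r) t = (1 - (t : ℂ) / r) ^ (-a : ℂ) := by
    filter_upwards [nhdsWithin_le_nhds (Iio_mem_nhds hr)] with t (ht : t < r)
    rw [complexMGF_ofReal, mgf_id_gammaMeasure ha hr ht, Complex.ofReal_cpow
      (by rw [sub_nonneg, div_le_one hr]; exact ht.le)]
    push_cast
    rfl
  -- identity theorem, with agreement on a real segment around `0`
  refine hmgf.eqOn_of_preconnected_of_frequently_eq hpow hU (z₀ := 0) (by simpa using hr) ?_ hz
  exact Complex.ofReal_zero ▸ (Complex.continuous_ofReal.continuousWithinAt.tendsto_nhdsWithin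
    fun _ ↦ by simp).frequently hreal.frequently

lemma charFun_gammaMeasure (ha : 0 < a) (hr : 0 < r) (t : ℝ) :
    charFun (gammaMeasure a r) t = (1 - t * I / r) ^ (-a : ℂ) := by
  rw [← complexMGF_id_mul_I, complexMGF_id_gammaMeasure ha hr (by simpa using hr)]

lemma fourier_gammaPDFReal (ha : 0 < a) (hr : 0 < r) (ξ : ℝ) :
    𝓕 (fun x ↦ (gammaPDFReal a r x : ℂ)) ξ = (1 + 2 * π * ξ * I / r) ^ (-a : ℂ) := by
  have h := charFun_gammaMeasure ha hr (-2 * π * ξ)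
  rw [charFun_apply_real, integral_gammaMeasure_eq_integral_smul ha hr] at h
  rw [Real.fourier_real_eq_integral_exp_smul]
  calc _ = ∫ x, gammaPDFReal a r x • cexp (↑(-2 * π * ξ) * x * I) := by
        congr 1 with x
        rw [Complex.real_smul, smul_eq_mul, mul_comm]
        push_cast
        ring_nf
    _ = _ := by
        rw [h]
        push_cast
        ring_nf

end ProbabilityTheory

lemma integrable_inv_one_add_I_mul_cpow {s : ℝ} (hs : 1 < s) :
    Integrable fun x : ℝ ↦ ((1 + I * x) ^ (s : ℂ))⁻¹ := by
  refine (integrable_norm_iff (by fun_prop : Measurable _).aestronglyMeasurable).1 ?_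
  refine (integrable_rpow_neg_one_add_norm_sq (μ := volume) (E := ℝ) (by simpa using hs)).congr
    (.of_forall fun x ↦ ?_)
  dsimp only
  rw [show 1 + I * x = ((1 : ℝ) : ℂ) + x * I by push_cast; ring, norm_inv, norm_cpow_real,
    norm_add_mul_I, Real.sqrt_eq_rpow, ← Real.rpow_mul (by positivity),
    ← Real.rpow_neg (by positivity), Real.norm_eq_abs, sq_abs, one_pow]
  ring_nf

lemma Real.fourierInv_comp_two_pi_mul (g : ℝ → ℂ) (w : ℝ) :
    𝓕⁻ (fun ξ ↦ g (2 * π * ξ)) w = (1 / (2 * π)) * ∫ x : ℝ, cexp (I * w * x) * g x := by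
  calc 𝓕⁻ (fun ξ ↦ g (2 * π * ξ)) w
      = ∫ ξ : ℝ, (fun x : ℝ ↦ cexp (I * w * x) * g x) (2 * π * ξ) := by
        rw [Real.fourierInv_eq']
        congr 1 with ξ
        simp only [RCLike.inner_apply, conj_trivial, smul_eq_mul]
        push_cast
        ring_nf
    _ = (1 / (2 * π)) * ∫ x : ℝ, cexp (I * w * x) * g x := by
        rw [Measure.integral_comp_mul_left (fun x : ℝ ↦ cexp (I * w * x) * g x),
          abs_of_pos (by positivity), Complex.real_smul]
        push_cast
        ring

open ProbabilityTheory

open Complex in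
theorem laplace_formula (p s : ℝ) (hp : 0 < p) (hs : 1 < s) :
    (1 / (2 * Real.pi)) * ∫ x : ℝ, Complex.exp (Complex.I * p * x) / (1 + Complex.I * x) ^ (s : ℂ) =
      ((p ^ (s - 1) * Real.exp (-p) / Real.Gamma s : ℝ) : ℂ) := by
  have hs₀ : 0 < s := by linarith
  set f : ℝ → ℂ := fun x ↦ gammaPDFReal s 1 x
  have hf : 𝓕 f = fun ξ ↦ ((1 + I * ↑(2 * π * ξ)) ^ (s : ℂ))⁻¹ := by
    ext ξ
    rw [fourier_gammaPDFReal hs₀ one_pos, Complex.cpow_neg]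
    push_cast
    ring_nf
  have hinv : 𝓕⁻ (𝓕 f) p = f p :=
    (integrable_gammaPDFReal hs₀ one_pos).ofReal.fourierInv_fourier_eq
      (hf ▸ (integrable_inv_one_add_I_mul_cpow hs).comp_mul_left' (by positivity))
      (continuous_ofReal.continuousAt.comp (continuousAt_gammaPDFReal hp))
  rw [hf, Real.fourierInv_comp_two_pi_mul fun x : ℝ ↦ ((1 + I * x) ^ (s : ℂ))⁻¹] at hinv
  simp_rw [← div_eq_mul_inv] at hinv
  rw [hinv]
  simp only [f, gammaPDFReal, if_pos hp.le, Real.one_rpow, one_mul]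
  push_cast
  ring
end

section
/- For each positive integer p, 2^p · ∑_{λ ⊢ p, ℓ(λ) ≤ 2} [2]_λ/([4]_λ · h_λ²) = 12·(2p+4)!·2^p / (p!·(p+2)!·(p+3)!·(p+4)!). -/
/-!
A partition with at most two parts is `(a, x)` with `a ≥ x` and `a + x = p`, once padded with zero
rows, which change neither `[b]_λ` nor `h_λ`. For `λ = (a, x)` one has `[2]_λ = (a+1)! x!`,
`12 [4]_λ = (a+3)! (x+2)!` and `(a - x + 1) h_λ = (a+1)! x!`, so the summand is
`12 (p+1-2x)² C(p+1, x) C(p+5, x+2) / ((p+1)! (p+5)!)`. It is invariant under `x ↦ p+1-x` and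
vanishes at the centre, so the sum over `x ≤ p/2` is half the sum over `x ≤ p+1`.
With `n = p + 1`, write `(n-2x) C(n, x) = n (C(n-1, x) - C(n-1, n-x))` and
`(n-2x) C(n+4, x+2) = (n+4) (C(n+3, x+2) - C(n+3, x+1))`; the second factor is antisymmetric
under `x ↦ n - x`, so Vandermonde's identity leaves `2 n (n+4)` times the Catalan-type difference
`C(2n+2, n+1) - C(2n+2, n+2) = (2n+2)! / ((n+1)! (n+2)!)`.
-/

/-- The parts of a partition of `p`, sorted in decreasing order. -/
def sortedParts {p : ℕ} (P : Nat.Partition p) : List ℕ :=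
  (P.parts.sort (· ≤ ·)).reverse

/-- The generalized Pochhammer symbol `[b]_λ = ∏_{i=1}^{ℓ(λ)} ∏_{j=1}^{λ_i} (b + j - i)`
(with parameter σ = 1), for a partition given as a decreasing list of parts. -/
noncomputable def pochhammer1 (b : ℝ) (l : List ℕ) : ℝ :=
  ∏ i ∈ Finset.range l.length, ∏ j ∈ Finset.range (l.getD i 0), (b + (j : ℝ) - (i : ℝ))

/-- The product of all hook-lengths of a partition given as a decreasing list of parts:
the hook length of the box in (0-indexed) row `i`, column `j` is
`(λ_i - 1 - j) + #{i' > i : λ_{i'} > j} + 1`. -/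
def hookProd (l : List ℕ) : ℕ :=
  ∏ i ∈ Finset.range l.length, ∏ j ∈ Finset.range (l.getD i 0),
    (l.getD i 0 - j + ((l.drop (i + 1)).filter (fun a => j < a)).length)

open Finset Nat

theorem pochhammer1_append_zero (b : ℝ) (l : List ℕ) :
    pochhammer1 b (l ++ [0]) = pochhammer1 b l := by
  rw [pochhammer1, List.length_append, List.length_singleton, prod_range_succ,
    List.getD_append_right _ _ _ _ le_rfl]
  simp only [Nat.sub_self, List.getD_cons_zero, range_zero, prod_empty, mul_one]
  refine prod_congr rfl fun i hi => ?_
  rw [List.getD_append _ _ _ _ (mem_range.mp hi)]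

theorem hookProd_append_zero (l : List ℕ) : hookProd (l ++ [0]) = hookProd l := by
  rw [hookProd, List.length_append, List.length_singleton, prod_range_succ,
    List.getD_append_right _ _ _ _ le_rfl]
  simp only [Nat.sub_self, List.getD_cons_zero, range_zero, prod_empty, mul_one]
  refine prod_congr rfl fun i hi => ?_
  rw [List.getD_append _ _ _ _ (mem_range.mp hi), List.drop_append_of_le_length (mem_range.mp hi)]
  simp

theorem apply_append_replicate_zero {M : Type*} {f : List ℕ → M} (hf : ∀ l, f (l ++ [0]) = f l)
    (l : List ℕ) (k : ℕ) : f (l ++ List.replicate k 0) = f l := by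
  induction k with
  | zero => simp
  | succ k ih => rw [List.replicate_succ', ← List.append_assoc, hf, ih]

theorem prod_range_cast_add_eq_ascFactorial {R : Type*} [CommSemiring R] (d n : ℕ) :
    ∏ j ∈ range n, ((d : R) + 1 + j) = ((d + 1).ascFactorial n : ℕ) := by
  rw [ascFactorial_eq_prod_range]
  push_cast
  rfl

theorem factorial_mul_factorial_mul_pochhammer1_pair (c a x : ℕ) :
    ((c + 1)! * c ! : ℝ) * pochhammer1 (c + 2) [a, x] = (a + c + 1)! * (x + c)! := by
  have row0 : ∏ j ∈ range a, ((c : ℝ) + 2 + j - (0 : ℕ)) = ((c + 1 + 1).ascFactorial a : ℕ) := by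
    rw [← prod_range_cast_add_eq_ascFactorial]
    push_cast
    ring_nf
  have row1 : ∏ j ∈ range x, ((c : ℝ) + 2 + j - (1 : ℕ)) = ((c + 1).ascFactorial x : ℕ) := by
    rw [← prod_range_cast_add_eq_ascFactorial]
    push_cast
    ring_nf
  simp only [pochhammer1, List.length_cons, List.length_nil, zero_add, prod_range_succ,
    range_zero, prod_empty, one_mul, List.getD_cons_zero, List.getD_cons_succ]
  rw [row0, row1, show a + c + 1 = c + 1 + a by ring, add_comm x,
    ← factorial_mul_ascFactorial (c + 1) a, ← factorial_mul_ascFactorial c x]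
  push_cast
  ring

theorem hookProd_pair_top_row (a x : ℕ) (h : x ≤ a) :
    ∏ j ∈ range a, (a - j + (([x] : List ℕ).filter (fun b => decide (j < b))).length) =
      (a + 1).descFactorial x * (a - x)! := by
  obtain ⟨k, rfl⟩ := Nat.exists_eq_add_of_le h
  rw [prod_range_add, descFactorial_eq_prod_range, ← descFactorial_self,
    descFactorial_eq_prod_range, Nat.add_sub_cancel_left]
  congr 1 <;> refine prod_congr rfl fun j hj => ?_ <;> have := mem_range.mp hj
  · rw [List.filter_cons_of_pos (by simpa using this), List.filter_nil, List.length_singleton]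
    omega
  · rw [List.filter_cons_of_neg (by simp), List.filter_nil, List.length_nil]
    omega

theorem hookProd_pair (a x : ℕ) (h : x ≤ a) : (a - x + 1) * hookProd [a, x] = (a + 1)! * x ! := by
  simp only [hookProd, List.length_cons, List.length_nil, zero_add, prod_range_succ, range_zero,
    prod_empty, one_mul, List.getD_cons_zero, List.getD_cons_succ, List.drop_succ_cons,
    List.drop_zero, hookProd_pair_top_row a x h, List.filter_nil, List.length_nil, add_zero]
  rw [← descFactorial_eq_prod_range, descFactorial_self,
    ← factorial_mul_descFactorial (by omega : x ≤ a + 1), show a + 1 - x = a - x + 1 by omega,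
    factorial_succ]
  ring

theorem append_replicate_zero_eq_pair {l : List ℕ} (hl : l.length ≤ 2) (hs : l.Pairwise (· ≥ ·)) :
    l ++ List.replicate (2 - l.length) 0 = [l.sum - l.getD 1 0, l.getD 1 0] ∧
      2 * l.getD 1 0 ≤ l.sum := by
  match l, hl, hs with
  | [], _, _ => simp
  | [a], _, _ => simp
  | [a, b], _, hs =>
    have hba := List.pairwise_pair.mp hs
    exact ⟨by simp, by
      simp only [List.getD_cons_succ, List.getD_cons_zero, List.sum_cons, List.sum_nil]; omega⟩

section
variable {p : ℕ} (P : Nat.Partition p)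

theorem coe_sortedParts : (sortedParts P : Multiset ℕ) = P.parts := by
  simp [sortedParts]

theorem pairwise_sortedParts : (sortedParts P).Pairwise (· ≥ ·) := by
  rw [sortedParts, List.pairwise_reverse]
  exact Multiset.pairwise_sort _ _

theorem sortedParts_eq_of_coe_eq {l : List ℕ} (hl : l.Pairwise (· ≥ ·))
    (h : (l : Multiset ℕ) = P.parts) : sortedParts P = l :=
  (Multiset.coe_eq_coe.mp ((coe_sortedParts P).trans h.symm)).eq_of_pairwise'
    (pairwise_sortedParts P) hl

theorem sortedParts_append_replicate_zero (hP : P.parts.card ≤ 2) :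
    sortedParts P ++ List.replicate (2 - P.parts.card) 0 =
        [p - (sortedParts P).getD 1 0, (sortedParts P).getD 1 0] ∧
      2 * (sortedParts P).getD 1 0 ≤ p := by
  have hlen : (sortedParts P).length = P.parts.card := by
    rw [← Multiset.coe_card, coe_sortedParts]
  have hsum : (sortedParts P).sum = p := by
    rw [← Multiset.sum_coe, coe_sortedParts, P.parts_sum]
  have h := append_replicate_zero_eq_pair (hlen ▸ hP) (pairwise_sortedParts P)
  rwa [hlen, hsum] at h

end

theorem sum_partitions_card_le_two {M : Type*} [AddCommMonoid M] (p : ℕ) (f : List ℕ → M)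
    (hf : ∀ l, f (l ++ [0]) = f l) :
    ∑ P ∈ univ.filter (fun P : Nat.Partition p => P.parts.card ≤ 2), f (sortedParts P) =
      ∑ x ∈ range (p / 2 + 1), f [p - x, x] := by
  refine sum_bij' (fun P _ => (sortedParts P).getD 1 0)
    (fun x hx => Nat.Partition.ofSums p {p - x, x} (by
      rw [mem_range] at hx
      rw [Multiset.insert_eq_cons, Multiset.sum_cons, Multiset.sum_singleton]
      omega)) ?_ ?_ ?_ ?_ ?_
  · intro P hP
    simp only [mem_filter, mem_univ, true_and] at hP
    simp only [mem_range]
    have := (sortedParts_append_replicate_zero P hP).2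
    omega
  · intro x hx
    simp only [mem_filter, mem_univ, true_and, Nat.Partition.ofSums_parts]
    exact (Multiset.card_le_card (Multiset.filter_le _ _)).trans (by simp)
  · intro P hP
    simp only [mem_filter, mem_univ, true_and] at hP
    ext1
    rw [Nat.Partition.ofSums_parts, Multiset.insert_eq_cons, ← Multiset.coe_singleton,
      Multiset.cons_coe, ← (sortedParts_append_replicate_zero P hP).1, ← Multiset.coe_add,
      coe_sortedParts, Multiset.filter_add,
      Multiset.filter_eq_self.mpr fun a ha => (P.parts_pos ha).ne',
      Multiset.filter_eq_nil.mpr (by simp), add_zero]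
  · intro x hx
    simp only [mem_range] at hx
    have hs : ([p - x, x].filter (· ≠ 0)).Pairwise (· ≥ ·) :=
      (List.pairwise_pair.mpr (by omega)).filter _
    rw [sortedParts_eq_of_coe_eq _ hs
      (by rw [Nat.Partition.ofSums_parts, ← Multiset.filter_coe]; rfl)]
    rcases Nat.eq_zero_or_pos x with rfl | hx0
    · cases p <;> simp
    · simp [hx0.ne', show p - x ≠ 0 by omega]
  · intro P hP
    simp only [mem_filter, mem_univ, true_and] at hP
    rw [← (sortedParts_append_replicate_zero P hP).1, apply_append_replicate_zero hf]

theorem sub_two_mul_mul_choose {R : Type*} [CommRing R] (m k : ℕ) :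
    ((m + 1 : R) - 2 * (k + 1)) * (m + 1).choose (k + 1) =
      (m + 1) * ((m.choose (k + 1) : R) - m.choose k) := by
  have pascal := congrArg (Nat.cast : ℕ → R) (Nat.choose_succ_succ' m k)
  have absorb := congrArg (Nat.cast : ℕ → R) (Nat.add_one_mul_choose_eq m k)
  push_cast at pascal absorb
  linear_combination (m + 1 : R) * pascal + 2 * absorb

theorem sub_two_mul_mul_choose_eq_sub_choose_sub {R : Type*} [CommRing R] (m x : ℕ)
    (hx : x ≤ m + 1) :
    ((m + 1 : R) - 2 * x) * (m + 1).choose x =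
      (m + 1) * ((m.choose x : R) - m.choose (m + 1 - x)) := by
  rcases x with _ | k
  · simp [choose_succ_self]
  · rw [show m + 1 - (k + 1) = m - k by omega, choose_symm (by omega)]
    push_cast
    exact sub_two_mul_mul_choose m k

theorem sum_range_choose_mul_choose_add {R : Type*} [CommSemiring R] (a b c N : ℕ) (hc : c ≤ b)
    (hN : a < N) :
    ∑ x ∈ range N, (a.choose x : R) * b.choose (x + c) = (a + b).choose (b - c) := by
  have vanish : ∀ x, a < x ∨ b - c < x → (a.choose x : R) * b.choose (x + c) = 0 := by
    rintro x (hx | hx)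
    · rw [choose_eq_zero_of_lt hx, Nat.cast_zero, zero_mul]
    · rw [choose_eq_zero_of_lt (by omega : b < x + c), Nat.cast_zero, mul_zero]
  calc ∑ x ∈ range N, (a.choose x : R) * b.choose (x + c)
      = ∑ x ∈ range (N + (b - c) + 1), (a.choose x : R) * b.choose (x + c) :=
        sum_subset (range_subset_range.2 (by omega)) fun x _ hx =>
          vanish x (.inl (by rw [mem_range, not_lt] at hx; omega))
    _ = ∑ x ∈ range (b - c + 1), (a.choose x : R) * b.choose (x + c) :=
        (sum_subset (range_subset_range.2 (by omega)) fun x _ hx =>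
          vanish x (.inr (by rw [mem_range, not_lt] at hx; omega))).symm
    _ = ∑ x ∈ range (b - c + 1), (a.choose x : R) * b.choose (b - c - x) :=
        sum_congr rfl fun x hx => by
          rw [choose_symm_of_eq_add (by rw [mem_range] at hx; omega : b = x + c + (b - c - x))]
    _ = (a + b).choose (b - c) := by
        rw [add_choose_eq, Nat.sum_antidiagonal_eq_sum_range_succ_mk]
        push_cast
        rfl

theorem sum_range_sub_choose_reflect_mul_of_antisymm {R : Type*} [CommRing R] (m : ℕ) (g : ℕ → R)
    (hg : ∀ x ≤ m + 1, g (m + 1 - x) = -g x) :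
    ∑ x ∈ range (m + 2), ((m.choose x : R) - m.choose (m + 1 - x)) * g x =
      2 * ∑ x ∈ range (m + 2), (m.choose x : R) * g x := by
  have reflect : ∑ x ∈ range (m + 2), (m.choose (m + 1 - x) : R) * g x =
      -∑ x ∈ range (m + 2), (m.choose x : R) * g x := by
    rw [← sum_range_reflect, ← sum_neg_distrib]
    refine sum_congr rfl fun x hx => ?_
    have := mem_range.mp hx
    rw [show m + 2 - 1 - x = m + 1 - x by omega, show m + 1 - (m + 1 - x) = x by omega,
      hg x (by omega)]
    ring
  simp only [sub_mul, sum_sub_distrib, reflect]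
  ring

theorem sum_sub_two_mul_sq_mul_choose_mul_choose {R : Type*} [CommRing R] (m : ℕ) :
    ∑ x ∈ range (m + 2), ((m + 1 : R) - 2 * x) ^ 2 * (m + 1).choose x * (m + 5).choose (x + 2) =
      2 * (m + 1) * (m + 5) * (((2 * m + 4).choose (m + 2) : R) - (2 * m + 4).choose (m + 3)) := by
  have split : ∀ x, ((m + 1 : R) - 2 * x) * (m + 5).choose (x + 2) =
      (m + 5) * (((m + 4).choose (x + 2) : R) - (m + 4).choose (x + 1)) := by
    intro x
    have := sub_two_mul_mul_choose (R := R) (m + 4) (x + 1)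
    push_cast at this
    linear_combination this
  have antisymm : ∀ x ≤ m + 1,
      ((m + 1 : R) - 2 * (m + 1 - x : ℕ)) * (m + 5).choose (m + 1 - x + 2) =
        -(((m + 1 : R) - 2 * x) * (m + 5).choose (x + 2)) := by
    intro x hx
    rw [choose_symm_of_eq_add (by omega : m + 5 = m + 1 - x + 2 + (x + 2)), Nat.cast_sub hx]
    push_cast
    ring
  calc ∑ x ∈ range (m + 2), ((m + 1 : R) - 2 * x) ^ 2 * (m + 1).choose x * (m + 5).choose (x + 2)
      = (m + 1) * ∑ x ∈ range (m + 2), ((m.choose x : R) - m.choose (m + 1 - x)) *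
          (((m + 1 : R) - 2 * x) * (m + 5).choose (x + 2)) := by
        rw [mul_sum]
        refine sum_congr rfl fun x hx => ?_
        rw [← mul_assoc, ← mul_assoc,
          ← sub_two_mul_mul_choose_eq_sub_choose_sub m x (Nat.lt_succ_iff.mp (mem_range.mp hx))]
        ring
    _ = 2 * (m + 1) *
          ∑ x ∈ range (m + 2), (m.choose x : R) * ((m + 1 - 2 * x) * (m + 5).choose (x + 2)) := by
        rw [sum_range_sub_choose_reflect_mul_of_antisymm _ _ antisymm]
        ring
    _ = _ := by
        simp only [split, mul_sub, mul_left_comm _ (m + 5 : R), ← mul_sum, sum_sub_distrib,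
          sum_range_choose_mul_choose_add m (m + 4) _ (m + 2) (by omega : 2 ≤ m + 4) (by omega),
          sum_range_choose_mul_choose_add m (m + 4) _ (m + 2) (by omega : 1 ≤ m + 4) (by omega)]
        rw [show m + (m + 4) = 2 * m + 4 by omega, show m + 4 - 2 = m + 2 by omega,
          show m + 4 - 1 = m + 3 by omega]
        ring

theorem factorial_mul_factorial_succ_mul_choose_sub {R : Type*} [CommRing R] (n : ℕ) :
    (n ! * (n + 1)! : R) * ((2 * n).choose n - (2 * n).choose (n + 1)) = (2 * n)! := by
  have central := congrArg (Nat.cast : ℕ → R) (Nat.add_choose_mul_factorial_mul_factorial n n)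
  have step := congrArg (Nat.cast : ℕ → R) (Nat.choose_succ_right_eq (2 * n) n)
  rw [← two_mul] at central
  rw [show 2 * n - n = n by omega] at step
  push_cast at central step ⊢
  rw [factorial_succ]
  push_cast
  linear_combination (-(n ! * n !) : R) * step + central

theorem sum_range_succ_eq_two_mul_of_symm {R : Type*} [Semiring R] (f : ℕ → R) (N : ℕ)
    (hsymm : ∀ x ≤ N, f (N - x) = f x) (hmid : ∀ x, 2 * x = N → f x = 0) :
    ∑ x ∈ range (N + 1), f x = 2 * ∑ x ∈ range ((N + 1) / 2), f x := by
  obtain ⟨k, rfl | rfl⟩ := N.even_or_odd'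
  · have hk : (2 * k + 1) / 2 = k := by omega
    rw [hk, show 2 * k + 1 = k + (k + 1) by omega, sum_range_add, sum_range_succ',
      Nat.add_zero, hmid k rfl, add_zero, two_mul, ← sum_range_reflect f k]
    congr 1
    refine sum_congr rfl fun y hy => ?_
    have := mem_range.mp hy
    rw [← hsymm _ (by omega)]
    congr 1
    omega
  · have hk : (2 * k + 1 + 1) / 2 = k + 1 := by omega
    rw [hk, show 2 * k + 1 + 1 = (k + 1) + (k + 1) by omega, sum_range_add, two_mul,
      ← sum_range_reflect f (k + 1)]
    congr 1
    refine sum_congr rfl fun y hy => ?_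
    have := mem_range.mp hy
    rw [← hsymm _ (by omega)]
    congr 1
    omega

noncomputable def twoRowSummand (p x : ℕ) : ℝ :=
  12 / ((p + 1)! * (p + 5)!) *
    (((p : ℝ) + 1 - 2 * x) ^ 2 * (p + 1).choose x * (p + 5).choose (x + 2))

theorem pochhammer1_div_hookProd_sq_pair (p x : ℕ) (hx : 2 * x ≤ p) :
    pochhammer1 2 [p - x, x] / (pochhammer1 4 [p - x, x] * (hookProd [p - x, x] : ℝ) ^ 2) =
      twoRowSummand p x := by
  obtain ⟨a, rfl⟩ := Nat.exists_eq_add_of_le' (by omega : x ≤ p)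
  have h : x ≤ a := by omega
  rw [Nat.add_sub_cancel]
  have h2 := factorial_mul_factorial_mul_pochhammer1_pair 0 a x
  have h4 := factorial_mul_factorial_mul_pochhammer1_pair 2 a x
  have hook := congrArg (Nat.cast : ℕ → ℝ) (hookProd_pair a x h)
  norm_num at h2 h4
  push_cast [Nat.cast_sub h] at hook
  have hxa : (x : ℝ) ≤ a := by exact_mod_cast h
  have h4' : pochhammer1 4 [a, x] = (a + 3)! * (x + 2)! / 12 := by linarith
  have hook' : (hookProd [a, x] : ℝ) = (a + 1)! * x ! / (a - x + 1) := by
    rw [eq_div_iff (by linarith)]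
    linarith
  rw [twoRowSummand, show a + x + 1 = x + (a + 1) by ring,
    show a + x + 5 = x + 2 + (a + 3) by ring, Nat.cast_add_choose, Nat.cast_add_choose, h2, h4',
    hook']
  have hden : (a : ℝ) - x + 1 ≠ 0 := by linarith
  push_cast
  field_simp
  ring

theorem twoRowSummand_symm (p x : ℕ) (hx : x ≤ p + 1) :
    twoRowSummand p (p + 1 - x) = twoRowSummand p x := by
  rw [twoRowSummand, twoRowSummand, choose_symm hx,
    choose_symm_of_eq_add (by omega : p + 5 = p + 1 - x + 2 + (x + 2)), Nat.cast_sub hx]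
  push_cast
  ring

theorem sum_twoRowSummand (p : ℕ) :
    ∑ x ∈ range (p + 2), twoRowSummand p x =
      24 * (2 * p + 4)! / (p ! * (p + 2)! * (p + 3)! * (p + 4)!) := by
  have key := sum_sub_two_mul_sq_mul_choose_mul_choose (R := ℝ) p
  have catalan := factorial_mul_factorial_succ_mul_choose_sub (R := ℝ) (p + 2)
  rw [show 2 * (p + 2) = 2 * p + 4 by omega, show p + 2 + 1 = p + 3 from rfl] at catalan
  simp only [twoRowSummand]
  rw [← mul_sum, key, ← catalan, factorial_succ p, show p + 5 = (p + 4) + 1 from rfl,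
    factorial_succ (p + 4)]
  push_cast
  field_simp
  ring

theorem curlyC_two_eval_general (p : ℕ) :
    (2 : ℝ) ^ p * ∑ P ∈ Finset.univ.filter (fun P : Nat.Partition p => P.parts.card ≤ 2),
        pochhammer1 2 (sortedParts P) /
          (pochhammer1 4 (sortedParts P) * ((hookProd (sortedParts P) : ℝ)) ^ 2) =
      12 * (Nat.factorial (2 * p + 4) : ℝ) * 2 ^ p /
        ((Nat.factorial p : ℝ) * (Nat.factorial (p + 2)) * (Nat.factorial (p + 3)) *
          (Nat.factorial (p + 4))) := by
  rw [sum_partitions_card_le_two p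
    (fun l => pochhammer1 2 l / (pochhammer1 4 l * (hookProd l : ℝ) ^ 2)) fun l => by
      simp only [pochhammer1_append_zero, hookProd_append_zero]]
  have terms : ∀ x ∈ range (p / 2 + 1), pochhammer1 2 [p - x, x] /
      (pochhammer1 4 [p - x, x] * (hookProd [p - x, x] : ℝ) ^ 2) = twoRowSummand p x :=
    fun x hx => pochhammer1_div_hookProd_sq_pair p x (by rw [mem_range] at hx; omega)
  have half := sum_range_succ_eq_two_mul_of_symm (twoRowSummand p) (p + 1)
    (fun x hx => twoRowSummand_symm p x hx) fun x hx => by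
      have hc : ((p : ℝ) + 1 - 2 * x) = 0 := by
        rw [sub_eq_zero]
        exact_mod_cast hx.symm
      simp [twoRowSummand, hc]
  rw [show (p + 1 + 1) / 2 = p / 2 + 1 by omega, sum_twoRowSummand] at half
  rw [sum_congr rfl terms]
  linear_combination (2 : ℝ) ^ p / 2 * half.symm

theorem curlyC_two_eval (p : ℕ) (hp : 0 < p) :
    (2 : ℝ) ^ p * ∑ P ∈ Finset.univ.filter (fun P : Nat.Partition p => P.parts.card ≤ 2),
        pochhammer1 2 (sortedParts P) /
          (pochhammer1 4 (sortedParts P) * ((hookProd (sortedParts P) : ℝ)) ^ 2) =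
      12 * (Nat.factorial (2 * p + 4) : ℝ) * 2 ^ p /
        ((Nat.factorial p : ℝ) * (Nat.factorial (p + 2)) * (Nat.factorial (p + 3)) *
          (Nat.factorial (p + 4))) :=
  curlyC_two_eval_general p
end
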